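/- arXiv:2603.24273 — 3 statements merged into one kernel-verified Lean document; each statement's English description precedes it below -/
import Mathlib

section
/- Let E be a set of equations, Φ a set of faults, φ : E → Set Φ, F(M) = ⋃_{e∈M} φ(e), and 𝒯 a family of subsets of E closed under unions of nonempty subfamilies. If M₁ and M₂ are RG sets, then F(M₁) ∪ F(M₂) is a fault signature, and M₁ ∪ M₂ is contained in the unique RG set R with F(R) = F(M₁) ∪ F(M₂). -/
open Set

/-- The fault signature map: faults appearing in a set of equations. -/
def faultsOf {E Φ : Type*} (φ : E → Set Φ) (M : Set E) : Set Φ := ⋃ e ∈ M, φ e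

/-- A fault signature: a nonempty set of faults realized by some testable set. -/
def IsFaultSignature {E Φ : Type*} (φ : E → Set Φ) (𝒯 : Set (Set E)) (F₀ : Set Φ) : Prop :=
  F₀.Nonempty ∧ ∃ M ∈ 𝒯, faultsOf φ M = F₀

/-- An RG set: a testable set with nonempty fault signature that contains every
testable set with the same fault signature. -/
def IsRGSet {E Φ : Type*} (φ : E → Set Φ) (𝒯 : Set (Set E)) (M : Set E) : Prop :=
  M ∈ 𝒯 ∧ (faultsOf φ M).Nonempty ∧
    ∀ M' ∈ 𝒯, faultsOf φ M' = faultsOf φ M → M' ⊆ M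

/-! The union of all testable sets with a given fault signature is again testable, has the same
signature, and contains each of them, so it is the RG set of that signature. Applying this to the
testable set `M₁ ∪ M₂` gives the RG set for `F(M₁) ∪ F(M₂)`; it is unique because two RG sets with
the same signature contain each other. -/

section

variable {E Φ : Type*} {φ : E → Set Φ} {𝒯 : Set (Set E)}

lemma faultsOf_union (φ : E → Set Φ) (A B : Set E) :
    faultsOf φ (A ∪ B) = faultsOf φ A ∪ faultsOf φ B :=
  biUnion_union A B φ

lemma faultsOf_sUnion (φ : E → Set Φ) (𝒞 : Set (Set E)) :
    faultsOf φ (⋃₀ 𝒞) = ⋃ M ∈ 𝒞, faultsOf φ M := by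
  simp only [faultsOf, sUnion_eq_biUnion, biUnion_iUnion]

lemma union_mem_of_sUnion_mem (hclosed : ∀ 𝒞 ⊆ 𝒯, 𝒞.Nonempty → ⋃₀ 𝒞 ∈ 𝒯) {A B : Set E}
    (hA : A ∈ 𝒯) (hB : B ∈ 𝒯) : A ∪ B ∈ 𝒯 := by
  simpa using hclosed {A, B} (pair_subset hA hB) (insert_nonempty A {B})

lemma exists_isRGSet_superset (hclosed : ∀ 𝒞 ⊆ 𝒯, 𝒞.Nonempty → ⋃₀ 𝒞 ∈ 𝒯) {M : Set E}
    (hM : M ∈ 𝒯) (hne : (faultsOf φ M).Nonempty) :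
    ∃ R, IsRGSet φ 𝒯 R ∧ faultsOf φ R = faultsOf φ M ∧ M ⊆ R := by
  set 𝒞 := {M' | M' ∈ 𝒯 ∧ faultsOf φ M' = faultsOf φ M}
  have hM𝒞 : M ∈ 𝒞 := ⟨hM, rfl⟩
  have hF : faultsOf φ (⋃₀ 𝒞) = faultsOf φ M := by
    rw [faultsOf_sUnion]
    exact (iUnion₂_subset fun M' hM' => hM'.2.le).antisymm (subset_biUnion_of_mem hM𝒞)
  refine ⟨⋃₀ 𝒞, ⟨hclosed 𝒞 (fun _ h => h.1) ⟨M, hM𝒞⟩, hF ▸ hne, ?_⟩, hF,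
    subset_sUnion_of_mem hM𝒞⟩
  exact fun M' hM' hM'F => subset_sUnion_of_mem ⟨hM', hM'F.trans hF⟩

lemma IsRGSet.eq_of_faultsOf_eq {R S : Set E} (hR : IsRGSet φ 𝒯 R) (hS : IsRGSet φ 𝒯 S)
    (h : faultsOf φ R = faultsOf φ S) : R = S :=
  (hS.2.2 R hR.1 h).antisymm (hR.2.2 S hS.1 h.symm)

end

/-- If 𝒯 is closed under unions of nonempty subfamilies and `M₁`, `M₂`
are RG sets, then `F(M₁) ∪ F(M₂)` is a fault signature and `M₁ ∪ M₂` is contained in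
the unique RG set `R` with `F(R) = F(M₁) ∪ F(M₂)`. -/
theorem stmt5_union_of_RG_sets
    {E Φ : Type*} (φ : E → Set Φ) (𝒯 : Set (Set E))
    (hclosed : ∀ 𝒞 ⊆ 𝒯, 𝒞.Nonempty → ⋃₀ 𝒞 ∈ 𝒯)
    (M₁ M₂ : Set E) (h₁ : IsRGSet φ 𝒯 M₁) (h₂ : IsRGSet φ 𝒯 M₂) :
    IsFaultSignature φ 𝒯 (faultsOf φ M₁ ∪ faultsOf φ M₂) ∧
    ∃! R : Set E, IsRGSet φ 𝒯 R ∧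
      faultsOf φ R = faultsOf φ M₁ ∪ faultsOf φ M₂ ∧ M₁ ∪ M₂ ⊆ R := by
  obtain ⟨hT₁, hne₁, -⟩ := h₁
  obtain ⟨hT₂, -, -⟩ := h₂
  have hne : (faultsOf φ M₁ ∪ faultsOf φ M₂).Nonempty := hne₁.mono subset_union_left
  obtain ⟨R, hR, hRF, hsub⟩ := exists_isRGSet_superset hclosed
    (union_mem_of_sUnion_mem hclosed hT₁ hT₂) ((faultsOf_union φ M₁ M₂).symm ▸ hne)
  rw [faultsOf_union] at hRF
  exact ⟨⟨hne, R, hR.1, hRF⟩, R, ⟨hR, hRF, hsub⟩,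
    fun S ⟨hS, hSF, _⟩ => hS.eq_of_faultsOf_eq hR (hSF.trans hRF.symm)⟩
end

section
/- Let E and X be finite sets of equations and variables, var : E → Finset X, and φ(M) = |M| − |var(M)| for M ⊆ E, where var(M) = ⋃_{e∈M} var(e). For any N ⊆ E, the collection of subsets of N that maximize φ among all subsets of N is closed under union and intersection; consequently, there exists a unique inclusion-smallest subset N⁺ of N with φ(N⁺) = max{φ(M') : M' ⊆ N}. -/
open Finset

/-- The structural redundancy `φ(M) = |M| − |var(M)|` (as an integer). -/
def red {E X : Type*} [DecidableEq X] (var : E → Finset X) (M : Finset E) : ℤ :=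
  (M.card : ℤ) - (M.biUnion var).card

/-- The maximal redundancy attained by subsets of `N`. -/
def maxRed {E X : Type*} [DecidableEq E] [DecidableEq X]
    (var : E → Finset X) (N : Finset E) : ℤ :=
  N.powerset.sup' (Finset.powerset_nonempty N) (red var)

lemma red_le_maxRed {E X : Type*} [DecidableEq E] [DecidableEq X]
    (var : E → Finset X) {N M : Finset E} (h : M ⊆ N) :
    red var M ≤ maxRed var N :=
  Finset.le_sup' (red var) (Finset.mem_powerset.mpr h)

lemma red_submodular {E X : Type*} [DecidableEq E] [DecidableEq X]
    (var : E → Finset X) (A B : Finset E) :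
    red var A + red var B ≤ red var (A ∪ B) + red var (A ∩ B) := by
  have hcard : (A ∪ B).card + (A ∩ B).card = A.card + B.card :=
    Finset.card_union_add_card_inter A B
  have hbu : (A ∪ B).biUnion var = A.biUnion var ∪ B.biUnion var := by
    ext x
    simp [Finset.mem_biUnion, or_and_right, exists_or]
  have hbi : (A ∩ B).biUnion var ⊆ A.biUnion var ∩ B.biUnion var := by
    intro x hx
    simp only [Finset.mem_biUnion, Finset.mem_inter] at hx ⊢
    obtain ⟨e, he, hxe⟩ := hx
    exact ⟨⟨e, he.1, hxe⟩, ⟨e, he.2, hxe⟩⟩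
  have hv : ((A ∪ B).biUnion var).card + ((A ∩ B).biUnion var).card ≤
      (A.biUnion var).card + (B.biUnion var).card := by
    have := Finset.card_union_add_card_inter (A.biUnion var) (B.biUnion var)
    have h2 := Finset.card_le_card hbi
    rw [hbu]
    omega
  simp only [red]
  omega

/-- The subsets of `N` maximizing the redundancy `φ` among all
subsets of `N` are closed under union and intersection; consequently there is a
unique inclusion-smallest subset `N⁺` of `N` attaining the maximum. -/
theorem stmt14_maximizers_closed_and_smallest_exists
    {E X : Type*} [Fintype E] [Fintype X] [DecidableEq E] [DecidableEq X]
    (var : E → Finset X) (N : Finset E) :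
    (∀ A B : Finset E, A ⊆ N → B ⊆ N →
      red var A = maxRed var N → red var B = maxRed var N →
      red var (A ∪ B) = maxRed var N ∧ red var (A ∩ B) = maxRed var N) ∧
    ∃! P : Finset E, P ⊆ N ∧ red var P = maxRed var N ∧
      ∀ Q ⊆ N, red var Q = maxRed var N → P ⊆ Q := by
  have closed : ∀ A B : Finset E, A ⊆ N → B ⊆ N →
      red var A = maxRed var N → red var B = maxRed var N →
      red var (A ∪ B) = maxRed var N ∧ red var (A ∩ B) = maxRed var N := by
    intro A B hA hB hrA hrB
    have h1 : red var (A ∪ B) ≤ maxRed var N :=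
      red_le_maxRed var (Finset.union_subset hA hB)
    have h2 : red var (A ∩ B) ≤ maxRed var N :=
      red_le_maxRed var ((Finset.inter_subset_left).trans hA)
    have h3 := red_submodular var A B
    constructor <;> omega
  refine ⟨closed, ?_⟩
  -- set of maximizers
  set S : Finset (Finset E) :=
    N.powerset.filter (fun M => red var M = maxRed var N) with hS
  have hSne : S.Nonempty := by
    obtain ⟨M, hM, hMeq⟩ :=
      Finset.exists_mem_eq_sup' (Finset.powerset_nonempty N) (red var)
    exact ⟨M, Finset.mem_filter.mpr ⟨hM, hMeq.symm⟩⟩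
  set P : Finset E := S.inf' hSne id with hP
  have hPprop : P ⊆ N ∧ red var P = maxRed var N := by
    refine Finset.inf'_induction hSne id
      (p := fun M => M ⊆ N ∧ red var M = maxRed var N) ?_ ?_
    · intro A hA B hB
      exact ⟨(Finset.inter_subset_left).trans hA.1,
        (closed A B hA.1 hB.1 hA.2 hB.2).2⟩
    · intro M hM
      have := Finset.mem_filter.mp hM
      exact ⟨Finset.mem_powerset.mp this.1, this.2⟩
  have hPmin : ∀ Q ⊆ N, red var Q = maxRed var N → P ⊆ Q := by
    intro Q hQ hrQ
    exact Finset.inf'_le id (Finset.mem_filter.mpr ⟨Finset.mem_powerset.mpr hQ, hrQ⟩)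
  refine ⟨P, ⟨hPprop.1, hPprop.2, hPmin⟩, ?_⟩
  intro Q ⟨hQ1, hQ2, hQ3⟩
  exact Finset.Subset.antisymm (hQ3 P hPprop.1 hPprop.2) (hPmin Q hQ1 hQ2)
end

section
/- Let E and X be finite sets of equations and variables, var : E → Finset X, and φ(M) = |M| − |var(M)| for M ⊆ E, where var(M) = ⋃_{e∈M} var(e). If M is an MSO set, i.e., a PSO set none of whose proper subsets is PSO, then φ(M) = 1. -/
/-!
A PSO set has redundancy at least one, since the empty set has redundancy zero. Removing one
equation lowers the redundancy by at most one, so if an MSO set `M` had redundancy at least two,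
some `M \ {e}` would still have positive redundancy. Descending through subsets of no larger
redundancy, every set of positive redundancy contains a PSO set, which would then be a PSO proper
subset of `M`.
-/

open Finset

/-- A set `M` is proper structurally overdetermined (PSO) if it is nonempty and every
proper subset has strictly smaller redundancy. -/
def IsPSO {E X : Type*} [DecidableEq X] (var : E → Finset X) (M : Finset E) : Prop :=
  M.Nonempty ∧ ∀ M' ⊂ M, red var M' < red var M

/-- A PSO set is minimal structurally overdetermined (MSO) if no proper subset is PSO. -/
def IsMSO {E X : Type*} [DecidableEq X] (var : E → Finset X) (M : Finset E) : Prop :=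
  IsPSO var M ∧ ∀ M' ⊂ M, ¬ IsPSO var M'

section Redundancy

variable {E X : Type*} [DecidableEq X] (var : E → Finset X)

@[simp]
lemma red_empty : red var ∅ = 0 := by
  simp [red]

lemma red_sub_one_le_red_erase [DecidableEq E] {M : Finset E} {e : E} (he : e ∈ M) :
    red var M - 1 ≤ red var (M.erase e) := by
  have hvar : ((M.erase e).biUnion var).card ≤ (M.biUnion var).card :=
    card_le_card (biUnion_subset_biUnion_of_subset_left _ (erase_subset e M))
  have hcard : ((M.erase e).card : ℤ) = M.card - 1 := by
    rw [card_erase_of_mem he, Nat.cast_sub (card_pos.mpr ⟨e, he⟩), Nat.cast_one]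
  unfold red
  omega

lemma IsPSO.one_le_red {M : Finset E} (hM : IsPSO var M) : 1 ≤ red var M := by
  have h := hM.2 ∅ (empty_ssubset.mpr hM.1)
  rw [red_empty] at h
  omega

lemma exists_isPSO_subset_of_one_le_red (S : Finset E) (hS : 1 ≤ red var S) :
    ∃ N ⊆ S, IsPSO var N := by
  induction S using Finset.strongInductionOn with
  | _ S ih =>
    by_cases hPSO : IsPSO var S
    · exact ⟨S, subset_rfl, hPSO⟩
    have hne : S.Nonempty := by
      rw [nonempty_iff_ne_empty]
      rintro rfl
      simp at hS
    obtain ⟨S', hS'S, hred⟩ : ∃ S' ⊂ S, red var S ≤ red var S' := by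
      simpa [IsPSO, hne] using hPSO
    obtain ⟨N, hNS', hN⟩ := ih S' hS'S (hS.trans hred)
    exact ⟨N, hNS'.trans hS'S.subset, hN⟩

end Redundancy

theorem stmt16_MSO_has_redundancy_one_general
    {E X : Type*} [DecidableEq E] [DecidableEq X]
    (var : E → Finset X) (M : Finset E) (hM : IsMSO var M) :
    red var M = 1 := by
  obtain ⟨hPSO, hmin⟩ := hM
  refine le_antisymm ?_ (hPSO.one_le_red var)
  by_contra! h2
  obtain ⟨e, he⟩ := hPSO.1
  have hred : 1 ≤ red var (M.erase e) := by
    linarith [red_sub_one_le_red_erase var he]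
  obtain ⟨N, hN, hNPSO⟩ := exists_isPSO_subset_of_one_le_red var (M.erase e) hred
  exact hmin N (hN.trans_ssubset (erase_ssubset he)) hNPSO

/-- Every MSO set has redundancy one. -/
theorem stmt16_MSO_has_redundancy_one
    {E X : Type*} [Fintype E] [Fintype X] [DecidableEq E] [DecidableEq X]
    (var : E → Finset X) (M : Finset E) (hM : IsMSO var M) :
    red var M = 1 :=
  stmt16_MSO_has_redundancy_one_general var M hM
end
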